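/- Uniform exponential ergodicity of CM3: for every n ≥ 1 and every x₀ ∈ [0,1], the n-step transition probability satisfies pⁿ(x₀,(0,1)) ≤ (3/4)ⁿ; hence for every x₀ ∈ [0,1), pⁿ(x₀,{0}) ≥ 1 − (3/4)ⁿ, and therefore sup_{x₀ ∈ [0,1)} ‖pⁿ(x₀,·) − δ₀‖ ≤ (3/4)ⁿ → 0 as n → ∞, i.e. the Markov measures converge to the invariant measure δ₀ in total variation, uniformly in the initial point x₀ ∈ [0,1) and with exponential rate. Moreover CM3 satisfies the Doob–Doeblin condition (D) with φ = (1/2)δ₀ + (1/2)δ₁, ε = 1/4 and k = 1. -/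

import Mathlib

open MeasureTheory Set Filter Topology Function

/-- A bounded finitely additive set function on the σ-algebra. -/
def IsFinAdd {X : Type*} [MeasurableSpace X] (μ : Set X → ℝ) : Prop :=
  μ ∅ = 0 ∧ ∀ E F : Set X, MeasurableSet E → MeasurableSet F → Disjoint E F →
    μ (E ∪ F) = μ E + μ F

/-- Nonnegativity on measurable sets. -/
def IsNonnegSF {X : Type*} [MeasurableSpace X] (μ : Set X → ℝ) : Prop :=
  ∀ E : Set X, MeasurableSet E → 0 ≤ μ E

/-- Countable additivity on the σ-algebra. -/
def IsCtblAdd {X : Type*} [MeasurableSpace X] (μ : Set X → ℝ) : Prop :=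
  ∀ E : ℕ → Set X, (∀ n, MeasurableSet (E n)) → Pairwise (Disjoint on E) →
    HasSum (fun n => μ (E n)) (μ (⋃ n, E n))

/-- A nonnegative finitely additive measure is purely finitely additive if the only
countably additive measure `lam` with `0 ≤ lam ≤ μ` is `lam = 0`. -/
def IsPurelyFinAdd {X : Type*} [MeasurableSpace X] (μ : Set X → ℝ) : Prop :=
  ∀ lam : Set X → ℝ, IsFinAdd lam → IsCtblAdd lam →
    (∀ E, MeasurableSet E → 0 ≤ lam E) → (∀ E, MeasurableSet E → lam E ≤ μ E) →
    ∀ E, MeasurableSet E → lam E = 0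

/-- The integral of a bounded measurable function with respect to a (finitely additive)
set function, defined by the layer-cake formula. -/
noncomputable def faIntegral {X : Type*} [MeasurableSpace X] (μ : Set X → ℝ) (f : X → ℝ) : ℝ :=
  (∫ t in Set.Ioi (0:ℝ), μ {x | t < f x}) - (∫ t in Set.Ioi (0:ℝ), μ {x | f x < -t})

/-- The Dirac measure at `y`, as a set function. -/
noncomputable def diracSF (y : ℝ) (E : Set ℝ) : ℝ := E.indicator (fun _ => (1:ℝ)) y

/-- The transition function of CM1: `p(x,·) = x·δ_{x²} + (1-x)·δ₀` on `(0,1)`,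
`p(0,·) = δ₀`, `p(1,·) = δ₁` (the formula below specializes correctly at `0` and `1`). -/
noncomputable def p1 (x : ℝ) (E : Set ℝ) : ℝ :=
  x * diracSF (x ^ 2) E + (1 - x) * diracSF 0 E

/-- The transition function of CM2: `p(x,·) = (1-x)·δ_{x²} + x·δ₀` on `(0,1)`,
`p(0,·) = δ₀`, `p(1,·) = δ₁`. -/
noncomputable def p2 (x : ℝ) (E : Set ℝ) : ℝ :=
  if x = 1 then diracSF 1 E else (1 - x) * diracSF (x ^ 2) E + x * diracSF 0 E

/-- The transition function of CM3: the CM1 rule on `[0,1/2]`, the CM2 rule on `(1/2,1)`,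
`p(1,·) = δ₁`. -/
noncomputable def p3 (x : ℝ) (E : Set ℝ) : ℝ :=
  if x = 1 then diracSF 1 E
  else if x ≤ 1 / 2 then x * diracSF (x ^ 2) E + (1 - x) * diracSF 0 E
  else (1 - x) * diracSF (x ^ 2) E + x * diracSF 0 E

/-- The `n`-step transition function of CM1 (`p1n 0` is the identity kernel, and
`p1n (n+1) x E = ∫ p1n n (y,E) p(x,dy)` is the integral convolution). -/
noncomputable def p1n : ℕ → ℝ → Set ℝ → ℝ
  | 0 => fun x E => diracSF x E
  | n + 1 => fun x E => faIntegral (p1 x) fun y => p1n n y E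

/-- The `n`-step transition function of CM2. -/
noncomputable def p2n : ℕ → ℝ → Set ℝ → ℝ
  | 0 => fun x E => diracSF x E
  | n + 1 => fun x E => faIntegral (p2 x) fun y => p2n n y E

/-- The `n`-step transition function of CM3. -/
noncomputable def p3n : ℕ → ℝ → Set ℝ → ℝ
  | 0 => fun x E => diracSF x E
  | n + 1 => fun x E => faIntegral (p3 x) fun y => p3n n y E

/-!
Started in `x ∈ [0,1)`, CM3 can only move to `x²` or to the absorbing state `0`, and it moves to
`x²` with probability `x` or `1 - x`, whichever rule applies, which is at most `1/2`. Hence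
`pⁿ(x,·) = α δ_w + (1 - α) δ₀` with `w = x^(2ⁿ) ∈ [0,1)` and `α ≤ (1/2)ⁿ ≤ (3/4)ⁿ`, and all the
bounds are read off this two-point form. For condition (D), `φ(E) ≤ 1/4` forces `0, 1 ∉ E`, so
`p(x,E)` is at most the weight `≤ 1/2` of `δ_{x²}`.
-/

lemma diracSF_of_mem {y : ℝ} {E : Set ℝ} (h : y ∈ E) : diracSF y E = 1 :=
  Set.indicator_of_mem h _

lemma diracSF_of_notMem {y : ℝ} {E : Set ℝ} (h : y ∉ E) : diracSF y E = 0 :=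
  Set.indicator_of_notMem h _

lemma diracSF_nonneg (y : ℝ) (E : Set ℝ) : 0 ≤ diracSF y E :=
  Set.indicator_nonneg (fun _ _ => zero_le_one) y

lemma diracSF_le_one (y : ℝ) (E : Set ℝ) : diracSF y E ≤ 1 :=
  Set.indicator_le_self' (fun _ _ => zero_le_one) y

lemma setIntegral_Ioi_zero_indicator_Iio (c : ℝ) :
    ∫ t in Ioi (0:ℝ), (Iio c).indicator 1 t = c⁺ := by
  rw [setIntegral_indicator measurableSet_Iio, Ioi_inter_Iio, Pi.one_def, setIntegral_const,
    Real.volume_real_Ioo, smul_eq_mul, mul_one, sub_zero, posPart_def]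

lemma integrableOn_Ioi_zero_indicator_Iio (c : ℝ) :
    IntegrableOn ((Iio c).indicator (1 : ℝ → ℝ)) (Ioi 0) := by
  rw [IntegrableOn, integrable_indicator_iff measurableSet_Iio, IntegrableOn,
    Measure.restrict_restrict measurableSet_Iio, Iio_inter_Ioi]
  exact integrableOn_const measure_Ioo_lt_top.ne

lemma diracSF_setOf_lt (u t : ℝ) (f : ℝ → ℝ) :
    diracSF u {x | t < f x} = (Iio (f u)).indicator 1 t := by
  simp [diracSF, Set.indicator_apply]

lemma diracSF_setOf_lt_neg (u t : ℝ) (f : ℝ → ℝ) :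
    diracSF u {x | f x < -t} = (Iio (-f u)).indicator 1 t := by
  simp [diracSF, Set.indicator_apply, lt_neg]

lemma faIntegral_add_diracSF (a b u v : ℝ) (f : ℝ → ℝ) :
    faIntegral (fun E => a * diracSF u E + b * diracSF v E) f = a * f u + b * f v := by
  have layer (c d : ℝ) : ∫ t in Ioi (0:ℝ), a * (Iio c).indicator 1 t + b * (Iio d).indicator 1 t
      = a * c⁺ + b * d⁺ := by
    rw [integral_add ((integrableOn_Ioi_zero_indicator_Iio c).const_mul a)
      ((integrableOn_Ioi_zero_indicator_Iio d).const_mul b), integral_const_mul,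
      integral_const_mul, setIntegral_Ioi_zero_indicator_Iio,
      setIntegral_Ioi_zero_indicator_Iio]
  simp only [faIntegral, diracSF_setOf_lt, diracSF_setOf_lt_neg, layer]
  linear_combination a * posPart_sub_negPart (f u) + b * posPart_sub_negPart (f v)

lemma faIntegral_diracSF (u : ℝ) (f : ℝ → ℝ) : faIntegral (diracSF u) f = f u := by
  simpa using faIntegral_add_diracSF 1 0 u u f

/-- The probability that CM3 moves from `x ∈ [0,1)` to `x²` rather than to `0`. -/
noncomputable def cm3SquareProb (x : ℝ) : ℝ := if x ≤ 1 / 2 then x else 1 - x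

lemma cm3SquareProb_nonneg {x : ℝ} (hx : x ∈ Icc 0 1) : 0 ≤ cm3SquareProb x := by
  unfold cm3SquareProb; split_ifs <;> linarith [hx.1, hx.2]

lemma cm3SquareProb_le_half (x : ℝ) : cm3SquareProb x ≤ 1 / 2 := by
  unfold cm3SquareProb; split_ifs <;> linarith

lemma p3_of_ne_one {x : ℝ} (hx : x ≠ 1) :
    p3 x = fun E => cm3SquareProb x * diracSF (x ^ 2) E + (1 - cm3SquareProb x) * diracSF 0 E := by
  funext E; unfold p3 cm3SquareProb; rw [if_neg hx]; split_ifs <;> ring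

lemma p3_one : p3 1 = diracSF 1 := by
  funext E; simp [p3]

lemma p3n_succ (n : ℕ) (x : ℝ) (E : Set ℝ) :
    p3n (n + 1) x E = faIntegral (p3 x) fun y => p3n n y E := rfl

lemma p3n_apply_zero (n : ℕ) : p3n n 0 = diracSF 0 := by
  induction n with
  | zero => rfl
  | succ n ih =>
    funext E
    rw [p3n_succ, p3_of_ne_one zero_ne_one, faIntegral_add_diracSF, ih]
    simp [cm3SquareProb]

lemma p3n_apply_one (n : ℕ) : p3n n 1 = diracSF 1 := by
  induction n with
  | zero => rfl
  | succ n ih => funext E; rw [p3n_succ, p3_one, faIntegral_diracSF, ih]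

theorem p3n_eq_two_point {x : ℝ} (hx : x ∈ Ico 0 1) (n : ℕ) :
    ∃ α ∈ Icc 0 ((1 / 2 : ℝ) ^ n), ∃ w ∈ Ico (0:ℝ) 1,
      ∀ E, p3n n x E = α * diracSF w E + (1 - α) * diracSF 0 E := by
  induction n generalizing x with
  | zero => exact ⟨1, by simp, x, hx, fun E => by simp [p3n]⟩
  | succ n ih =>
    have hsq : x ^ 2 ∈ Ico (0:ℝ) 1 := ⟨sq_nonneg x, pow_lt_one₀ hx.1 hx.2 two_ne_zero⟩
    obtain ⟨α, ⟨hα0, hα⟩, w, hw, hform⟩ := ih hsq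
    have hs0 := cm3SquareProb_nonneg (Ico_subset_Icc_self hx)
    refine ⟨cm3SquareProb x * α, ⟨mul_nonneg hs0 hα0, ?_⟩, w, hw, fun E => ?_⟩
    · rw [pow_succ']
      exact mul_le_mul (cm3SquareProb_le_half x) hα hα0 (by norm_num)
    · rw [p3n_succ, p3_of_ne_one hx.2.ne, faIntegral_add_diracSF, hform, p3n_apply_zero]
      ring

lemma p3n_Ioo_le (n : ℕ) {x : ℝ} (hx : x ∈ Icc 0 1) : p3n n x (Ioo 0 1) ≤ (1 / 2 : ℝ) ^ n := by
  rcases hx.2.eq_or_lt with rfl | hlt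
  · rw [p3n_apply_one, diracSF_of_notMem (by simp)]
    positivity
  · obtain ⟨α, ⟨hα0, hα⟩, w, -, hform⟩ := p3n_eq_two_point ⟨hx.1, hlt⟩ n
    rw [hform, diracSF_of_notMem (by simp : (0:ℝ) ∉ Ioo 0 1)]
    nlinarith [diracSF_le_one w (Ioo 0 1)]

lemma one_sub_le_p3n_singleton_zero (n : ℕ) {x : ℝ} (hx : x ∈ Ico 0 1) :
    1 - (1 / 2 : ℝ) ^ n ≤ p3n n x {0} := by
  obtain ⟨α, ⟨hα0, hα⟩, w, -, hform⟩ := p3n_eq_two_point hx n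
  rw [hform, diracSF_of_mem (mem_singleton 0)]
  nlinarith [diracSF_nonneg w {0}]

lemma abs_p3n_sub_diracSF_zero_le (n : ℕ) {x : ℝ} (hx : x ∈ Ico 0 1) (E : Set ℝ) :
    |p3n n x E - diracSF 0 E| ≤ (1 / 2 : ℝ) ^ n := by
  obtain ⟨α, ⟨hα0, hα⟩, w, -, hform⟩ := p3n_eq_two_point hx n
  have hdiff : |diracSF w E - diracSF 0 E| ≤ 1 :=
    abs_sub_le_of_nonneg_of_le (diracSF_nonneg _ _) (diracSF_le_one _ _)
      (diracSF_nonneg _ _) (diracSF_le_one _ _)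
  calc |p3n n x E - diracSF 0 E| = |α * (diracSF w E - diracSF 0 E)| := by
        rw [hform]; ring_nf
    _ = α * |diracSF w E - diracSF 0 E| := by rw [abs_mul, abs_of_nonneg hα0]
    _ ≤ (1 / 2 : ℝ) ^ n := (mul_le_of_le_one_right hα0 hdiff).trans hα

lemma p3_le_half_of_zero_one_notMem {E : Set ℝ} (h0 : (0:ℝ) ∉ E) (h1 : (1:ℝ) ∉ E) {x : ℝ}
    (hx : x ∈ Icc 0 1) : p3 x E ≤ 1 / 2 := by
  rcases eq_or_ne x 1 with rfl | hx1
  · rw [p3_one, diracSF_of_notMem h1]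
    norm_num
  · rw [p3_of_ne_one hx1]
    dsimp only
    rw [diracSF_of_notMem h0]
    nlinarith [cm3SquareProb_nonneg hx, cm3SquareProb_le_half x, diracSF_le_one (x ^ 2) E]

/-- Uniform exponential ergodicity of CM3: `pⁿ(x₀,(0,1)) ≤ (3/4)ⁿ` for all `x₀ ∈ [0,1]`,
hence `pⁿ(x₀,{0}) ≥ 1 - (3/4)ⁿ` for `x₀ ∈ [0,1)` and
`sup_{x₀ ∈ [0,1)} ‖pⁿ(x₀,·) - δ₀‖ ≤ (3/4)ⁿ → 0`; moreover CM3 satisfies the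
Doob–Doeblin condition (D) with `φ = (1/2)δ₀ + (1/2)δ₁`, `ε = 1/4`, `k = 1`. -/
theorem cm3_uniform_ergodicity :
    (∀ n : ℕ, 1 ≤ n → ∀ x₀ ∈ Set.Icc (0:ℝ) 1,
      p3n n x₀ (Set.Ioo 0 1) ≤ (3 / 4 : ℝ) ^ n) ∧
    (∀ n : ℕ, 1 ≤ n → ∀ x₀ ∈ Set.Ico (0:ℝ) 1,
      1 - (3 / 4 : ℝ) ^ n ≤ p3n n x₀ {0}) ∧
    (∀ n : ℕ, 1 ≤ n → ∀ x₀ ∈ Set.Ico (0:ℝ) 1, ∀ E : Set ℝ, MeasurableSet E →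
      |p3n n x₀ E - diracSF 0 E| ≤ (3 / 4 : ℝ) ^ n) ∧
    Tendsto (fun n : ℕ => ((3:ℝ) / 4) ^ n) atTop (nhds 0) ∧
    (∀ E : Set ℝ, MeasurableSet E →
      (1 / 2 : ℝ) * diracSF 0 E + (1 / 2 : ℝ) * diracSF 1 E ≤ 1 / 4 →
      ∀ x ∈ Set.Icc (0:ℝ) 1, p3 x E ≤ 3 / 4) := by
  have half_pow_le (n : ℕ) : (1 / 2 : ℝ) ^ n ≤ (3 / 4) ^ n :=
    pow_le_pow_left₀ (by norm_num) (by norm_num) n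
  refine ⟨fun n _ x hx => (p3n_Ioo_le n hx).trans (half_pow_le n),
    fun n _ x hx => (sub_le_sub_left (half_pow_le n) 1).trans (one_sub_le_p3n_singleton_zero n hx),
    fun n _ x hx E _ => (abs_p3n_sub_diracSF_zero_le n hx E).trans (half_pow_le n),
    tendsto_pow_atTop_nhds_zero_of_lt_one (by norm_num) (by norm_num), ?_⟩
  rintro E - hφ x hx
  have h0 : (0:ℝ) ∉ E := fun h => by
    rw [diracSF_of_mem h] at hφ
    linarith [diracSF_nonneg 1 E]
  have h1 : (1:ℝ) ∉ E := fun h => by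
    rw [diracSF_of_mem h] at hφ
    linarith [diracSF_nonneg 0 E]
  linarith [p3_le_half_of_zero_one_notMem h0 h1 hx]
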